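/- Let $a_1 < \dots < a_l$ be integers with consecutive gaps at most $b$, $A = \{a_1,\dots,a_l\}$, and let $n > 2b^2$. For any $t \in nA$, there exists a function $s : \{1,\dots,n\} \to A$ with $\sum_i s(i) = t$ such that $|\{i : a_1 < s(i) < a_l\}| \le 2b^2$, i.e., all but at most $2b^2$ of the summands equal the minimum or maximum of $A$. -/
import Mathlib

/-- The `n`-fold sumset of `A`. -/
def foldSum {G : Type*} [AddCommMonoid G] (n : ℕ) (A : Set G) : Set G :=
  {t | ∃ s : Fin n → G, (∀ i, s i ∈ A) ∧ ∑ i, s i = t}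

open Finset in
lemma exists_top_subset {α : Type*} [DecidableEq α] (w : α → ℤ) :
    ∀ (p : ℕ) (S : Finset α), p ≤ S.card →
      ∃ Y ⊆ S, Y.card = p ∧ ∀ y ∈ Y, ∀ x ∈ S \ Y, w x ≤ w y := by
  intro p
  induction p with
  | zero => exact fun S _ => ⟨∅, empty_subset _, rfl, by simp⟩
  | succ p ih =>
    intro S hS
    have hne : S.Nonempty := card_pos.mp (by omega)
    obtain ⟨m, hm, hmax⟩ := S.exists_max_image w hne
    obtain ⟨Y', hY'sub, hY'card, hY'⟩ := ih (S.erase m)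
      (by rw [card_erase_of_mem hm]; omega)
    have hmY' : m ∉ Y' := fun h => (mem_erase.mp (hY'sub h)).1 rfl
    refine ⟨insert m Y', ?_, ?_, ?_⟩
    · exact insert_subset hm (hY'sub.trans (erase_subset _ _))
    · rw [card_insert_of_notMem hmY', hY'card]
    · intro y hy x hx
      rcases mem_insert.mp hy with rfl | hy'
      · exact hmax x (mem_sdiff.mp hx).1
      · refine hY' y hy' x ?_
        rcases mem_sdiff.mp hx with ⟨hxS, hxY⟩
        exact mem_sdiff.mpr ⟨mem_erase.mpr ⟨fun h => hxY (h ▸ mem_insert_self _ _), hxS⟩,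
          fun h => hxY (mem_insert_of_mem h)⟩

set_option maxHeartbeats 1000000 in
theorem stmt_3 (b l : ℕ) (hl : 1 ≤ l) (a : Fin l → ℤ)
    (hmono : StrictMono a)
    (hgap : ∀ (i : ℕ) (h : i + 1 < l), a ⟨i + 1, h⟩ - a ⟨i, by omega⟩ ≤ (b : ℤ))
    (n : ℕ) (hn : 2 * b ^ 2 < n)
    (t : ℤ) (ht : t ∈ foldSum n (Set.range a)) :
    ∃ s : Fin n → ℤ, (∀ i, s i ∈ Set.range a) ∧ (∑ i, s i = t) ∧
      (Finset.univ.filter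
        (fun i => a ⟨0, by omega⟩ < s i ∧ s i < a ⟨l - 1, by omega⟩)).card ≤ 2 * b ^ 2 := by
  classical
  have hgap' : ∀ (j k : Fin l), (k : ℕ) = (j : ℕ) + 1 → a k - a j ≤ (b : ℤ) := by
    intro j k hk
    have h2 : (j : ℕ) + 1 < l := hk ▸ k.isLt
    have h := hgap j.val h2
    have e1 : (⟨j.val + 1, h2⟩ : Fin l) = k := Fin.ext (by simpa using hk.symm)
    have e2 : (⟨j.val, by omega⟩ : Fin l) = j := Fin.ext rfl
    rw [e1, e2] at h
    exact h
  obtain ⟨s0, hs0mem, hs0sum⟩ := ht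
  choose f0 hf0 using hs0mem
  rcases Nat.eq_zero_or_pos b with hb | hb
  · -- b = 0 : then l = 1 and the filter is empty
    refine ⟨s0, fun i => ⟨f0 i, hf0 i⟩, hs0sum, ?_⟩
    have hl1 : l = 1 := by
      by_contra h
      have hgap0 := hgap 0 (by omega)
      have hlt : a ⟨0, by omega⟩ < a ⟨0 + 1, by omega⟩ :=
        hmono (by simp [Fin.mk_lt_mk])
      omega
    have hEq : a ⟨l - 1, by omega⟩ = a ⟨0, by omega⟩ := by
      congr 1
      exact Fin.ext (by omega)
    have hempty : (Finset.univ.filter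
        (fun i => a ⟨0, by omega⟩ < s0 i ∧ s0 i < a ⟨l - 1, by omega⟩)) = ∅ := by
      refine Finset.filter_eq_empty_iff.mpr (fun i _ => ?_)
      rw [hEq]
      omega
    rw [hempty]
    simp
  · -- main case b ≥ 1
    -- the finite set of representations
    set T : Finset (Fin n → Fin l) :=
      Finset.univ.filter (fun f : Fin n → Fin l => ∑ i, a (f i) = t) with hTdef
    have hT0 : f0 ∈ T := by
      rw [hTdef, Finset.mem_filter]
      refine ⟨Finset.mem_univ _, ?_⟩
      calc ∑ i, a (f0 i) = ∑ i, s0 i := Finset.sum_congr rfl (fun i _ => hf0 i)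
        _ = t := hs0sum
    obtain ⟨f, hfT, hfmax⟩ := T.exists_max_image (fun f => ∑ i, (a (f i))^2) ⟨f0, hT0⟩
    have hfsum : ∑ i, a (f i) = t := (Finset.mem_filter.mp hfT).2
    refine ⟨fun i => a (f i), fun i => ⟨f i, rfl⟩, hfsum, ?_⟩
    by_contra hcard
    push_neg at hcard
    set I : Finset (Fin n) := Finset.univ.filter
      (fun i => a ⟨0, by omega⟩ < a (f i) ∧ a (f i) < a ⟨l - 1, by omega⟩) with hIdef
    have hIcard : 2 * (b * b) < I.card := by
      have h2 : 2 * b ^ 2 = 2 * (b * b) := by ring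
      omega
    -- basic facts about indices in I
    have hImem : ∀ i ∈ I, 1 ≤ (f i).val ∧ (f i).val + 1 < l := by
      intro i hi
      rw [hIdef, Finset.mem_filter] at hi
      obtain ⟨-, h1, h2⟩ := hi
      have hv1 : (⟨0, by omega⟩ : Fin l) < f i := hmono.lt_iff_lt.mp h1
      have hv2 : f i < (⟨l - 1, by omega⟩ : Fin l) := hmono.lt_iff_lt.mp h2
      rw [Fin.lt_def] at hv1 hv2
      simp only [Fin.val_mk] at hv1 hv2
      omega
    -- predecessor and successor maps
    obtain ⟨pd, hpd⟩ : ∃ pd : Fin l → Fin l,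
        pd = fun j => ⟨j.val - 1, Nat.lt_of_le_of_lt (Nat.sub_le _ _) j.isLt⟩ := ⟨_, rfl⟩
    obtain ⟨sc, hsc⟩ : ∃ sc : Fin l → Fin l,
        sc = fun j => if h : j.val + 1 < l then ⟨j.val + 1, h⟩ else j := ⟨_, rfl⟩
    obtain ⟨pstep, hpstep⟩ : ∃ pstep : Fin n → ℕ,
        pstep = fun i => (a (f i) - a (pd (f i))).toNat := ⟨_, rfl⟩
    obtain ⟨qstep, hqstep⟩ : ∃ qstep : Fin n → ℕ,
        qstep = fun i => (a (sc (f i)) - a (f i)).toNat := ⟨_, rfl⟩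
    have hPD : ∀ i ∈ I, a (pd (f i)) = a (f i) - (pstep i : ℤ) ∧
        1 ≤ pstep i ∧ pstep i ≤ b := by
      intro i hi
      obtain ⟨h1, h2⟩ := hImem i hi
      have hlt : pd (f i) < f i := by
        simp only [Fin.lt_def, hpd, Fin.val_mk]; omega
      have hmlt : a (pd (f i)) < a (f i) := hmono hlt
      have hgb : a (f i) - a (pd (f i)) ≤ (b : ℤ) := by
        refine hgap' (pd (f i)) (f i) ?_
        simp only [hpd, Fin.val_mk]; omega
      have htn : (pstep i : ℤ) = a (f i) - a (pd (f i)) := by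
        simp only [hpstep]
        exact Int.toNat_of_nonneg (by omega)
      refine ⟨by omega, ?_, ?_⟩ <;> omega
    have hSC : ∀ i ∈ I, a (sc (f i)) = a (f i) + (qstep i : ℤ) ∧
        1 ≤ qstep i ∧ qstep i ≤ b := by
      intro i hi
      obtain ⟨h1, h2⟩ := hImem i hi
      have hscval : (sc (f i)).val = (f i).val + 1 := by
        rw [hsc]; simp only [dif_pos h2]
      have hlt : f i < sc (f i) := by rw [Fin.lt_def]; omega
      have hmlt : a (f i) < a (sc (f i)) := hmono hlt
      have hgb : a (sc (f i)) - a (f i) ≤ (b : ℤ) := hgap' (f i) (sc (f i)) hscval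
      have htn : (qstep i : ℤ) = a (sc (f i)) - a (f i) := by
        simp only [hqstep]
        exact Int.toNat_of_nonneg (by omega)
      refine ⟨by omega, ?_, ?_⟩ <;> omega
    -- split I into a high part and a low part
    obtain ⟨Ihi, hIhiI, hIhicard, htop⟩ :=
      exists_top_subset (fun i => a (f i)) (b * b) I (by omega)
    obtain ⟨Ilo, hIlo⟩ : ∃ Ilo : Finset (Fin n), Ilo = I \ Ihi := ⟨_, rfl⟩
    have hIloI : Ilo ⊆ I := hIlo ▸ Finset.sdiff_subset
    have hIlocard : b * b + 1 ≤ Ilo.card := by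
      rw [hIlo, Finset.card_sdiff_of_subset hIhiI, hIhicard]; omega
    -- pigeonhole on the low part for pstep
    have hmapsP : ∀ i ∈ Ilo, pstep i ∈ Finset.Icc 1 b := by
      intro i hi
      obtain ⟨-, h1, h2⟩ := hPD i (hIloI hi)
      exact Finset.mem_Icc.mpr ⟨h1, h2⟩
    have hIccb : (Finset.Icc 1 b).card = b := by simp
    obtain ⟨p, hpmem, hpfib⟩ :=
      Finset.exists_lt_card_fiber_of_mul_lt_card_of_maps_to (n := b) hmapsP
        (by rw [hIccb]; omega)
    have hmapsQ : ∀ i ∈ Ihi, qstep i ∈ Finset.Icc 1 b := by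
      intro i hi
      obtain ⟨-, h1, h2⟩ := hSC i (hIhiI hi)
      exact Finset.mem_Icc.mpr ⟨h1, h2⟩
    obtain ⟨q, hqmem, hqfib⟩ :=
      Finset.exists_lt_card_fiber_of_mul_lt_card_of_maps_to (n := b - 1) hmapsQ
        (by rw [hIccb, hIhicard]
            have h1 : b * b = b * (b - 1) + b := by rw [← Nat.mul_succ]; congr 1; omega
            omega)
    rw [Finset.mem_Icc] at hpmem hqmem
    -- choose the sets to exchange
    obtain ⟨Xs, hXsub, hXcard⟩ :=
      Finset.exists_subset_card_eq (s := Finset.filter (fun x => pstep x = p) Ilo) (n := q)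
        (by omega)
    obtain ⟨Ys, hYsub, hYcard⟩ :=
      Finset.exists_subset_card_eq (s := Finset.filter (fun x => qstep x = q) Ihi) (n := p)
        (by omega)
    have hXlo : Xs ⊆ Ilo := hXsub.trans (Finset.filter_subset _ _)
    have hYhi : Ys ⊆ Ihi := hYsub.trans (Finset.filter_subset _ _)
    have hXI : Xs ⊆ I := hXlo.trans hIloI
    have hYI : Ys ⊆ I := hYhi.trans hIhiI
    have hdisj : Disjoint Xs Ys := by
      refine Finset.disjoint_left.mpr (fun i hiX hiY => ?_)
      exact (Finset.mem_sdiff.mp (hIlo ▸ hXlo hiX)).2 (hYhi hiY)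
    -- the exchanged representation
    obtain ⟨g, hg⟩ : ∃ g : Fin n → Fin l,
        g = fun i => if i ∈ Xs then pd (f i) else if i ∈ Ys then sc (f i) else f i := ⟨_, rfl⟩
    have hgX : ∀ i ∈ Xs, a (g i) = a (f i) - (p : ℤ) := by
      intro i hi
      have hstep : pstep i = p := (Finset.mem_filter.mp (hXsub hi)).2
      have := (hPD i (hXI hi)).1
      rw [hg]; simp only [if_pos hi]
      rw [this, hstep]
    have hgY : ∀ i ∈ Ys, a (g i) = a (f i) + (q : ℤ) := by
      intro i hi
      have hiX : i ∉ Xs := Finset.disjoint_right.mp hdisj hi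
      have hstep : qstep i = q := (Finset.mem_filter.mp (hYsub hi)).2
      have := (hSC i (hYI hi)).1
      rw [hg]; simp only [if_neg hiX, if_pos hi]
      rw [this, hstep]
    have hgO : ∀ i, i ∉ Xs → i ∉ Ys → g i = f i := by
      intro i h1 h2
      rw [hg]; simp only [if_neg h1, if_neg h2]
    -- general difference formula
    have hdiffsum : ∀ F' : Fin l → ℤ,
        (∑ i, F' (g i)) - (∑ i, F' (f i)) =
          (∑ i ∈ Xs, (F' (g i) - F' (f i))) + (∑ i ∈ Ys, (F' (g i) - F' (f i))) := by
      intro F'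
      rw [← Finset.sum_sub_distrib, ← Finset.sum_union hdisj]
      symm
      refine Finset.sum_subset (Finset.subset_univ _) (fun i _ hi => ?_)
      rw [Finset.mem_union] at hi
      push_neg at hi
      rw [hgO i hi.1 hi.2]
      ring
    -- the sum is preserved
    have hgsum : ∑ i, a (g i) = t := by
      have h1 := hdiffsum a
      have h2 : ∑ i ∈ Xs, (a (g i) - a (f i)) = (q : ℤ) * (-(p : ℤ)) := by
        calc ∑ i ∈ Xs, (a (g i) - a (f i)) = ∑ _i ∈ Xs, (-(p : ℤ)) :=
              Finset.sum_congr rfl (fun i hi => by have := hgX i hi; omega)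
          _ = (q : ℤ) * (-(p : ℤ)) := by
              rw [Finset.sum_const, hXcard, nsmul_eq_mul]
      have h3 : ∑ i ∈ Ys, (a (g i) - a (f i)) = (p : ℤ) * (q : ℤ) := by
        calc ∑ i ∈ Ys, (a (g i) - a (f i)) = ∑ _i ∈ Ys, (q : ℤ) :=
              Finset.sum_congr rfl (fun i hi => by have := hgY i hi; omega)
          _ = (p : ℤ) * (q : ℤ) := by
              rw [Finset.sum_const, hYcard, nsmul_eq_mul]
      rw [h2, h3] at h1
      have h0 : (∑ i, a (g i)) - (∑ i, a (f i)) = 0 := by rw [h1]; ring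
      omega
    have hgT : g ∈ T := by
      rw [hTdef, Finset.mem_filter]
      exact ⟨Finset.mem_univ _, hgsum⟩
    -- the sum of squares strictly increases : contradiction
    have hsq := hdiffsum (fun j => (a j) ^ 2)
    have hsqX : ∑ i ∈ Xs, ((a (g i)) ^ 2 - (a (f i)) ^ 2) =
        (q : ℤ) * (p : ℤ) ^ 2 - 2 * (p : ℤ) * ∑ i ∈ Xs, a (f i) := by
      calc ∑ i ∈ Xs, ((a (g i)) ^ 2 - (a (f i)) ^ 2)
          = ∑ i ∈ Xs, ((p : ℤ) ^ 2 - 2 * (p : ℤ) * a (f i)) :=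
            Finset.sum_congr rfl (fun i hi => by rw [hgX i hi]; ring)
        _ = (q : ℤ) * (p : ℤ) ^ 2 - 2 * (p : ℤ) * ∑ i ∈ Xs, a (f i) := by
            rw [Finset.sum_sub_distrib, Finset.sum_const, hXcard, nsmul_eq_mul,
              ← Finset.mul_sum]
    have hsqY : ∑ i ∈ Ys, ((a (g i)) ^ 2 - (a (f i)) ^ 2) =
        (p : ℤ) * (q : ℤ) ^ 2 + 2 * (q : ℤ) * ∑ i ∈ Ys, a (f i) := by
      calc ∑ i ∈ Ys, ((a (g i)) ^ 2 - (a (f i)) ^ 2)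
          = ∑ i ∈ Ys, ((q : ℤ) ^ 2 + 2 * (q : ℤ) * a (f i)) :=
            Finset.sum_congr rfl (fun i hi => by rw [hgY i hi]; ring)
        _ = (p : ℤ) * (q : ℤ) ^ 2 + 2 * (q : ℤ) * ∑ i ∈ Ys, a (f i) := by
            rw [Finset.sum_add_distrib, Finset.sum_const, hYcard, nsmul_eq_mul,
              ← Finset.mul_sum]
    have hcross : (p : ℤ) * ∑ i ∈ Xs, a (f i) ≤ (q : ℤ) * ∑ j ∈ Ys, a (f j) := by
      have h1 : (p : ℤ) * ∑ i ∈ Xs, a (f i) = ∑ _j ∈ Ys, ∑ i ∈ Xs, a (f i) := by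
        rw [Finset.sum_const, hYcard, nsmul_eq_mul]
      have h2 : (q : ℤ) * ∑ j ∈ Ys, a (f j) = ∑ _i ∈ Xs, ∑ j ∈ Ys, a (f j) := by
        rw [Finset.sum_const, hXcard, nsmul_eq_mul]
      rw [h1, h2, Finset.sum_comm]
      refine Finset.sum_le_sum (fun i hi => Finset.sum_le_sum (fun j hj => ?_))
      exact htop j (hYhi hj) i (hIlo ▸ hXlo hi)
    have hppos : (1 : ℤ) ≤ (p : ℤ) := by exact_mod_cast hpmem.1
    have hqpos : (1 : ℤ) ≤ (q : ℤ) := by exact_mod_cast hqmem.1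
    have hlt : (∑ i, (a (f i)) ^ 2) < ∑ i, (a (g i)) ^ 2 := by
      have hpos : (0 : ℤ) < (q : ℤ) * (p : ℤ) ^ 2 + (p : ℤ) * (q : ℤ) ^ 2 := by nlinarith
      nlinarith [hsq, hsqX, hsqY, hcross]
    exact absurd (hfmax g hgT) (not_le.mpr hlt)
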